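/- Let (A, Con, |~) be an abstract nonmonotonic system and B = (B, Con*, Δ) the canonical default structure constructed from it. For finite consistent sets P, Q ∈ Con, if Q ⊆ P ⊆ Q̃, then the set Q̃ ∪ {[Q]} is an extension of P in B. -/

import Mathlib

/-- A set is consistent if every finite subset of it lies in Con. -/
def IsCons {α : Type*} (Con : Set α → Prop) (S : Set α) : Prop :=
  ∀ X : Set α, X ⊆ S → X.Finite → Con X

/-- With trivial entailment: φ(x, S, 0) = x and
φ(x, S, i+1) = φ(x, S, i) ∪ {a | (X, a) ∈ Δ, X ⊆ φ(x, S, i), {a} ∪ S consistent}. -/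
def phiT {α : Type*} (Con : Set α → Prop) (Δ : Set (Set α × α)) (x S : Set α) :
    ℕ → Set α
  | 0 => x
  | i + 1 =>
      phiT Con Δ x S i ∪
        {a | ∃ X : Set α, (X, a) ∈ Δ ∧ X ⊆ phiT Con Δ x S i ∧ IsCons Con ({a} ∪ S)}

/-- Φ(x, S) = ⋃_{i≥0} φ(x, S, i). -/
def PhiT {α : Type*} (Con : Set α → Prop) (Δ : Set (Set α × α)) (x S : Set α) : Set α :=
  ⋃ i, phiT Con Δ x S i

/-- A consistent set y is an extension of x (x ε y) if Φ(x, y) = y. -/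
def ExtT {α : Type*} (Con : Set α → Prop) (Δ : Set (Set α × α)) (x y : Set α) : Prop :=
  IsCons Con y ∧ PhiT Con Δ x y = y

/-- X̃ := {t ∈ A | X |~ {t}}. -/
def Tilde {α : Type*} (snake : Set α → Set α → Prop) (X : Set α) : Set α :=
  {t | snake X {t}}

/-- The token set of the canonical default structure: tokens of A (`Sum.inl a`) together
with a fresh token [X] (`Sum.inr X`) for each X ∈ Con. -/
abbrev Tok (α : Type*) := α ⊕ Set α

/-- Δ := {(X, [X]) | X ∈ Con} ∪ {({[X]}, a) | X ∈ Con, X |~ {a}, a ∉ X}. -/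
def DeltaCan {α : Type*} (Con : Set α → Prop) (snake : Set α → Set α → Prop) :
    Set (Set (Tok α) × Tok α) :=
  {p | ∃ X : Set α, Con X ∧ p = (Sum.inl '' X, Sum.inr X)} ∪
  {p | ∃ (X : Set α) (a : α), Con X ∧ snake X {a} ∧ a ∉ X ∧
        p = ({Sum.inr X}, Sum.inl a)}

/-- A finite W ⊆ B lies in Con* iff (1) W ∩ A ∈ Con, (2) W contains at most one token of
the form [X], and (3) if [X] ∈ W then W \ {[X]} ⊆ A and X |~ (W \ {[X]}). -/
def ConStar {α : Type*} (Con : Set α → Prop) (snake : Set α → Set α → Prop)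
    (W : Set (Tok α)) : Prop :=
  W.Finite ∧
  Con (Sum.inl ⁻¹' W) ∧
  (∀ X Y : Set α, Sum.inr X ∈ W → Sum.inr Y ∈ W → X = Y) ∧
  (∀ X : Set α, Sum.inr X ∈ W →
    (∀ t ∈ W, t ≠ Sum.inr X → ∃ a : α, t = Sum.inl a) ∧
    snake X (Sum.inl ⁻¹' W))

/-!
Write `y` for `Q̃ ∪ {[Q]}`. By (4) and (6), `Q |~ T` for every finite `T ⊆ Q̃`, so every
finite subset of `y` lies in `Con*` and `y` is consistent. The defaults of `B` cannot leave `y`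
while staying consistent with it: a token `[X]` consistent with `[Q]` must be `[Q]` itself, and
from `[Q]` only the elements of `Q̃` are derivable. Conversely, `y` is reached in two rounds:
`Q ⊆ P` fires the default `(Q, [Q])`, and `[Q]` then fires `({[Q]}, a)` for every `a ∈ Q̃ \ Q`.
-/

section Extension

variable {α : Type*} {Con : Set α → Prop} {Δ : Set (Set α × α)} {x y : Set α}

theorem IsCons.singleton_union_of_mem (hy : IsCons Con y) {a : α} (ha : a ∈ y) :
    IsCons Con ({a} ∪ y) := by
  rwa [Set.union_eq_self_of_subset_left (Set.singleton_subset_iff.2 ha)]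

theorem phiT_mono : Monotone (phiT Con Δ x y) :=
  monotone_nat_of_le_succ fun _ => Set.subset_union_left

theorem mem_phiT_succ (hy : IsCons Con y) {i : ℕ} {X : Set α} {a : α} (hXa : (X, a) ∈ Δ)
    (hX : X ⊆ phiT Con Δ x y i) (ha : a ∈ y) : a ∈ phiT Con Δ x y (i + 1) :=
  Or.inr ⟨X, hXa, hX, hy.singleton_union_of_mem ha⟩

theorem phiT_subset_of_closed (hx : x ⊆ y)
    (hclosed : ∀ X a, (X, a) ∈ Δ → X ⊆ y → IsCons Con ({a} ∪ y) → a ∈ y)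
    (i : ℕ) :
    phiT Con Δ x y i ⊆ y := by
  induction i with
  | zero => exact hx
  | succ i ih =>
    rintro a (ha | ⟨X, hXa, hX, hcons⟩)
    · exact ih ha
    · exact hclosed X a hXa (hX.trans ih) hcons

theorem extT_of_closed (hy : IsCons Con y) (hx : x ⊆ y)
    (hclosed : ∀ X a, (X, a) ∈ Δ → X ⊆ y → IsCons Con ({a} ∪ y) → a ∈ y)
    (hreach : ∃ n, y ⊆ phiT Con Δ x y n) : ExtT Con Δ x y := by
  obtain ⟨n, hn⟩ := hreach
  exact ⟨hy, (Set.iUnion_subset (phiT_subset_of_closed hx hclosed)).antisymm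
    (hn.trans (Set.subset_iUnion _ n))⟩

end Extension

section Canonical

variable {α : Type*} {Con : Set α → Prop} {snake : Set α → Set α → Prop} {Q : Set α}

theorem snake_of_finite_subset_tilde (h4 : ∀ X Y : Set α, Y ⊆ X → Con X → snake X Y)
    (h6 : ∀ X Y Z : Set α, snake X Y → snake X Z → snake X (Y ∪ Z)) (hQ : Con Q)
    {T : Set α} (hT : T.Finite) (hTQ : T ⊆ Tilde snake Q) : snake Q T := by
  induction T, hT using Set.Finite.induction_on with
  | empty => exact h4 Q ∅ (Set.empty_subset _) hQ
  | @insert a s _ _ ih =>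
    rw [Set.insert_eq]
    exact h6 _ _ _ (hTQ (Set.mem_insert _ _)) (ih ((Set.subset_insert _ _).trans hTQ))

variable (snake Q) in
/-- The set `Q̃ ∪ {[Q]}` of the canonical default structure. -/
def tildeWithToken : Set (Tok α) :=
  Sum.inl '' Tilde snake Q ∪ {Sum.inr Q}

@[simp]
theorem inl_mem_tildeWithToken {a : α} :
    Sum.inl a ∈ tildeWithToken snake Q ↔ a ∈ Tilde snake Q := by
  simp [tildeWithToken]

@[simp]
theorem inr_mem_tildeWithToken {X : Set α} :
    Sum.inr X ∈ tildeWithToken snake Q ↔ X = Q := by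
  simp [tildeWithToken]

theorem isCons_tildeWithToken (hSnakeCon : ∀ X Y : Set α, snake X Y → Con X ∧ Con Y)
    (h4 : ∀ X Y : Set α, Y ⊆ X → Con X → snake X Y)
    (h6 : ∀ X Y Z : Set α, snake X Y → snake X Z → snake X (Y ∪ Z)) (hQ : Con Q) :
    IsCons (ConStar Con snake) (tildeWithToken snake Q) := by
  intro W hW hWfin
  have hinr : ∀ X, Sum.inr X ∈ W → X = Q := fun X hX => inr_mem_tildeWithToken.1 (hW hX)
  have hsnake : snake Q (Sum.inl ⁻¹' W) :=
    snake_of_finite_subset_tilde h4 h6 hQ (hWfin.preimage Sum.inl_injective.injOn)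
      fun a ha => inl_mem_tildeWithToken.1 (hW ha)
  refine ⟨hWfin, (hSnakeCon _ _ hsnake).2, fun X Y hX hY => (hinr X hX).trans (hinr Y hY).symm,
    fun X hX => ⟨fun t ht htX => ?_, hinr X hX ▸ hsnake⟩⟩
  rcases t with a | Y
  · exact ⟨a, rfl⟩
  · exact absurd (by rw [hinr X hX, hinr Y ht]) htX

theorem deltaCan_closed_tildeWithToken :
    ∀ X a, (X, a) ∈ DeltaCan Con snake → X ⊆ tildeWithToken snake Q →
      IsCons (ConStar Con snake) ({a} ∪ tildeWithToken snake Q) →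
      a ∈ tildeWithToken snake Q := by
  rintro X t (⟨X', -, hXt⟩ | ⟨X', b, -, hb, -, hXt⟩) hX hcons <;> cases hXt
  · have hpair :
        ({Sum.inr X', Sum.inr Q} : Set (Tok α)) ⊆ {Sum.inr X'} ∪ tildeWithToken snake Q :=
      Set.insert_subset (Or.inl rfl) (Set.singleton_subset_iff.2 (Or.inr (by simp)))
    obtain ⟨-, -, hunique, -⟩ := hcons _ hpair (Set.toFinite _)
    simpa using hunique X' Q (Or.inl rfl) (Or.inr rfl)
  · obtain rfl : X' = Q := inr_mem_tildeWithToken.1 (hX rfl)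
    simpa [Tilde] using hb

theorem tildeWithToken_subset_phiT_two (hcons : IsCons (ConStar Con snake) (tildeWithToken snake Q))
    (hQ : Con Q) {P : Set α} (hQP : Q ⊆ P) :
    tildeWithToken snake Q ⊆
      phiT (ConStar Con snake) (DeltaCan Con snake) (Sum.inl '' P) (tildeWithToken snake Q) 2 := by
  have htoken : Sum.inr Q ∈
      phiT (ConStar Con snake) (DeltaCan Con snake) (Sum.inl '' P) (tildeWithToken snake Q) 1 :=
    mem_phiT_succ hcons (Or.inl ⟨Q, hQ, rfl⟩) (Set.image_mono hQP) (by simp)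
  rintro (a | X) ha
  · by_cases haQ : a ∈ Q
    · exact phiT_mono (Nat.zero_le 2) ⟨a, hQP haQ, rfl⟩
    · exact mem_phiT_succ hcons (Or.inr ⟨Q, a, hQ, inl_mem_tildeWithToken.1 ha, haQ, rfl⟩)
        (Set.singleton_subset_iff.2 htoken) ha
  · obtain rfl : X = Q := inr_mem_tildeWithToken.1 ha
    exact phiT_mono (Nat.le_succ 1) htoken

end Canonical

theorem canonical_extension_of_general {α : Type*} (Con : Set α → Prop)
    (snake : Set α → Set α → Prop)
    -- |~ is a relation between members of Con
    (hSnakeCon : ∀ X Y : Set α, snake X Y → Con X ∧ Con Y)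
    (h4 : ∀ X Y : Set α, Y ⊆ X → Con X → snake X Y)
    (h6 : ∀ X Y Z : Set α, snake X Y → snake X Z → snake X (Y ∪ Z)) :
    ∀ P Q : Set α, Con P → Con Q → Q ⊆ P → P ⊆ Tilde snake Q →
      ExtT (ConStar Con snake) (DeltaCan Con snake)
        (Sum.inl '' P)
        (Sum.inl '' Tilde snake Q ∪ {Sum.inr Q}) := by
  intro P Q _ hQ hQP hPQ
  have hcons := isCons_tildeWithToken hSnakeCon h4 h6 hQ
  refine extT_of_closed hcons ?_ deltaCan_closed_tildeWithToken
    ⟨2, tildeWithToken_subset_phiT_two hcons hQ hQP⟩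
  rintro _ ⟨a, ha, rfl⟩
  exact inl_mem_tildeWithToken.2 (hPQ ha)

/-- if Q ⊆ P ⊆ Q̃ for finite consistent sets P, Q ∈ Con, then
Q̃ ∪ {[Q]} is an extension of P in the canonical default structure B. -/
theorem canonical_extension_of {α : Type*} (Con : Set α → Prop)
    (snake : Set α → Set α → Prop)
    -- Con is a collection of finite subsets of A
    (hCfin : ∀ X : Set α, Con X → X.Finite)
    -- |~ is a relation between members of Con
    (hSnakeCon : ∀ X Y : Set α, snake X Y → Con X ∧ Con Y)
    (h1 : ∀ X Y : Set α, X ⊆ Y → Con Y → Con X)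
    (h2 : ∀ a : α, Con {a})
    (h3 : ∀ X T : Set α, snake X T → Con (X ∪ T))
    (h4 : ∀ X Y : Set α, Y ⊆ X → Con X → snake X Y)
    (h5 : ∀ X T Y : Set α, snake X T → snake (X ∪ T) Y → snake X Y)
    (h6 : ∀ X Y Z : Set α, snake X Y → snake X Z → snake X (Y ∪ Z)) :
    ∀ P Q : Set α, Con P → Con Q → Q ⊆ P → P ⊆ Tilde snake Q →
      ExtT (ConStar Con snake) (DeltaCan Con snake)
        (Sum.inl '' P)
        (Sum.inl '' Tilde snake Q ∪ {Sum.inr Q}) :=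
  canonical_extension_of_general Con snake hSnakeCon h4 h6
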